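/- Let 𝔤 be a finite-dimensional Lie algebra over a field k, K ⊆ 𝔤 a subspace, E ⊆ 𝔤 a subspace, and ε an alternating bilinear form on 𝔤. Suppose L(E,ε) is closed under the semidirect (Courant) bracket on 𝔤 × 𝔤* and K × {0} ⊆ L(E,ε). Then K ⊆ E; ε(k, x) = 0 for all k ∈ K and x ∈ E; and ε(⁅k,x⁆, y) + ε(x, ⁅k,y⁆) = 0 for all k ∈ K and x, y ∈ E (note ⁅k,x⁆, ⁅k,y⁆ ∈ E). -/

import Mathlib

variable {k : Type*} [Field k] {L : Type*} [LieRing L] [LieAlgebra k L]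

/-- The coadjoint action of `x ∈ 𝔤` on `η ∈ 𝔤*`: `(x ∙ η)(z) = -η(⁅x, z⁆)`. -/
def coad (x : L) (η : Module.Dual k L) : Module.Dual k L :=
  -(η ∘ₗ LieAlgebra.ad k L x)

/-- The semidirect (Courant) bracket on `𝔤 × 𝔤*`:
`⁅(x, ξ), (y, η)⁆ = (⁅x, y⁆, x ∙ η - y ∙ ξ)`. -/
def courantBracket (a b : L × Module.Dual k L) : L × Module.Dual k L :=
  (⁅a.1, b.1⁆, coad a.1 b.2 - coad b.1 a.2)

/-- The subspace `L(E, ε) ⊆ 𝔤 × 𝔤*` attached to a subspace `E ⊆ 𝔤` and a bilinear form `ε`. -/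
def LSet (E : Submodule k L) (ε : L → L → k) : Set (L × Module.Dual k L) :=
  {p | p.1 ∈ E ∧ ∀ y ∈ E, p.2 y = ε p.1 y}

theorem coad_apply (x : L) (η : Module.Dual k L) (z : L) : coad x η z = -η ⁅x, z⁆ := rfl

theorem courantBracket_mk_zero (x y : L) (η : Module.Dual k L) :
    courantBracket (x, (0 : Module.Dual k L)) (y, η) = (⁅x, y⁆, coad x η) := by
  simp only [courantBracket, coad, LinearMap.zero_comp, neg_zero, sub_zero]

theorem mk_mem_LSet_of_mem (E : Submodule k L) (ε : L →ₗ[k] L →ₗ[k] k) {y : L} (hy : y ∈ E) :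
    (y, ε y) ∈ LSet E (fun x y => ε x y) :=
  ⟨hy, fun _ _ => rfl⟩

/-- The bracket of `(x, 0)` with `(y, ε y)` is `(⁅x, y⁆, -ε y ⁅x, ·⁆)`, so its membership in
`L(E, ε)` is exactly the invariance identity. -/
theorem invariant_of_mk_zero_mem_LSet (E : Submodule k L) (ε : L →ₗ[k] L →ₗ[k] k)
    (hclosed : ∀ a ∈ LSet E (fun x y => ε x y), ∀ b ∈ LSet E (fun x y => ε x y),
      courantBracket a b ∈ LSet E (fun x y => ε x y))
    {x : L} (hx : (x, (0 : Module.Dual k L)) ∈ LSet E (fun x y => ε x y))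
    {y z : L} (hy : y ∈ E) (hz : z ∈ E) :
    ε ⁅x, y⁆ z + ε y ⁅x, z⁆ = 0 := by
  have hbracket := (hclosed _ hx _ (mk_mem_LSet_of_mem E ε hy)).2 z hz
  rw [courantBracket_mk_zero, coad_apply] at hbracket
  linear_combination -hbracket

theorem lSet_contains_K_consequences_general
    (K E : Submodule k L) (ε : L →ₗ[k] L →ₗ[k] k)
    (hclosed : ∀ a ∈ LSet E (fun x y => ε x y), ∀ b ∈ LSet E (fun x y => ε x y),
      courantBracket a b ∈ LSet E (fun x y => ε x y))
    (hK : (K : Set L) ×ˢ ({0} : Set (Module.Dual k L)) ⊆ LSet E (fun x y => ε x y)) :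
    K ≤ E ∧
      (∀ x ∈ K, ∀ y ∈ E, ε x y = 0) ∧
      (∀ x ∈ K, ∀ y ∈ E, ∀ z ∈ E, ε ⁅x, y⁆ z + ε y ⁅x, z⁆ = 0) := by
  have hmem : ∀ x ∈ K, (x, (0 : Module.Dual k L)) ∈ LSet E (fun x y => ε x y) :=
    fun x hx => hK (Set.mk_mem_prod hx rfl)
  exact ⟨fun x hx => (hmem x hx).1, fun x hx y hy => ((hmem x hx).2 y hy).symm,
    fun x hx _ hy _ hz => invariant_of_mk_zero_mem_LSet E ε hclosed (hmem x hx) hy hz⟩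

/-- If `L(E, ε)` is closed under the semidirect (Courant) bracket and
`K × {0} ⊆ L(E, ε)`, then `K ⊆ E`, `ε` vanishes on `K × E`, and `ε` is `K`-invariant on `E`. -/
theorem lSet_contains_K_consequences [FiniteDimensional k L]
    (K E : Submodule k L) (ε : L →ₗ[k] L →ₗ[k] k) (hεalt : ∀ x, ε x x = 0)
    (hclosed : ∀ a ∈ LSet E (fun x y => ε x y), ∀ b ∈ LSet E (fun x y => ε x y),
      courantBracket a b ∈ LSet E (fun x y => ε x y))
    (hK : (K : Set L) ×ˢ ({0} : Set (Module.Dual k L)) ⊆ LSet E (fun x y => ε x y)) :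
    K ≤ E ∧
      (∀ x ∈ K, ∀ y ∈ E, ε x y = 0) ∧
      (∀ x ∈ K, ∀ y ∈ E, ∀ z ∈ E, ε ⁅x, y⁆ z + ε y ⁅x, z⁆ = 0) :=
  lSet_contains_K_consequences_general K E ε hclosed hK
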